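/- Let n ≥ 1 and let x_k, m_k : ℝ → ℝ (k = 1, …, n) be differentiable functions satisfying ẋ_k(t) = Σ_{i=1}^n m_i(t) |x_k(t) − x_i(t)| and ṁ_k(t) = 2 Σ_{i=1}^n m_k(t) m_i(t) sgn(x_i(t) − x_k(t)) for all t (with sgn 0 = 0), and suppose x_1(t) < x_2(t) < ⋯ < x_n(t) for all t. Then for each k with 1 ≤ k ≤ n, the function M_k(t) = Σ_{I} (∏_{i ∈ I} m_i(t)) (∏_{j=1}^{k−1} (x_{i_j}(t) − x_{i_{j+1}}(t))²) is constant in t, where the sum runs over all k-element subsets I = {i_1 < ⋯ < i_k} of {1, …, n}, and the inner product over j is interpreted as 1 when k = 1. -/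

import Mathlib

/-
Write `M_k = ∑_σ P σ * Q σ` over increasing `k`-tuples `σ`, with `P σ` the product of the masses
`m_{σ_j}` and `Q σ` the product of the squared gaps `(x_{σ_j} - x_{σ_{j+1}})²`. Along the flow
`Ṗ/P = 2 ∑_j (∑_{i > σ_j} m_i - ∑_{i < σ_j} m_i)`, and for `a < b`
`(x_a - x_b)(ẋ_a - ẋ_b) = (x_a - x_b)² (∑_{i < b} m_i - ∑_{i > a} m_i)`
`  + ∑_{a < i < b} m_i ((x_i - x_b)² - (x_i - x_a)²)`.
Adding these up, the mass sums telescope, and what is left of `d(P Q)/dt` is a sum over the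
particles `i` outside `σ`: each term is `± 2` times the weight of the `(k+1)`-tuple
`τ = σ ∪ {i}` with one of the two squared gaps adjacent to `i` omitted, with sign `+` when `i` is
the right end of that gap and `-` when it is the left end. Summed over `σ` and reindexed by `τ`,
every pair (`τ`, omitted gap) occurs once with each sign, so `dM_k/dt = 0`.
-/

open Finset

namespace Fin

lemma succ_succAbove_of_ne {k : ℕ} {j l : Fin k} (h : l ≠ j) :
    j.succ.succAbove l = j.castSucc.succAbove l := by
  rcases h.lt_or_gt with h | h
  · rw [succAbove_succ_of_le _ _ h.le, succAbove_castSucc_of_lt _ _ h]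
  · rw [succAbove_succ_of_lt _ _ h, succAbove_castSucc_of_le _ _ h.le]

lemma sum_univ_sub_add_sum_succ_sub_castSucc {R : Type*} [AddCommGroup R] {k : ℕ}
    (f g : Fin (k + 1) → R) :
    ∑ j, (f j - g j) + ∑ j : Fin k, (g j.succ - f j.castSucc) = f (last k) - g 0 := by
  rw [sum_sub_distrib, sum_sub_distrib, sum_univ_castSucc f, sum_univ_succ g]
  abel

lemma prod_comp_insertNth {ι β : Type*} [CommMonoid β] (f : ι → β) {r : ℕ} (p : Fin (r + 1))
    (i : ι) (σ : Fin r → ι) :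
    ∏ j, f (p.insertNth (α := fun _ => ι) i σ j) = f i * ∏ j, f (σ j) := by
  simp [prod_univ_succAbove _ p]

section InsertNth

variable {α : Type*} [Preorder α] {r : ℕ} {σ : Fin (r + 1) → α} {i : α}

lemma strictMono_insertNth_last_iff (hσ : StrictMono σ) :
    StrictMono ((last (r + 1)).insertNth i σ) ↔ σ (last r) < i :=
  ⟨fun h => (strictMono_insertNth_iff _ _ _ |>.1 h).2.1 _ (castSucc_lt_last _),
    strictMono_insertNth_last hσ i⟩

lemma strictMono_insertNth_zero_iff (hσ : StrictMono σ) :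
    StrictMono ((0 : Fin (r + 2)).insertNth i σ) ↔ i < σ 0 :=
  ⟨fun h => (strictMono_insertNth_iff _ _ _ |>.1 h).2.2 _ (zero_le _),
    strictMono_insertNth_zero hσ i⟩

lemma strictMono_insertNth_castSucc_succ_iff (hσ : StrictMono σ) (j : Fin r) :
    StrictMono (j.castSucc.succ.insertNth i σ) ↔ σ j.castSucc < i ∧ i < σ j.succ := by
  refine ⟨fun h => ?_, fun h => strictMono_insertNth hσ j i h.1 h.2⟩
  have h' := strictMono_insertNth_iff _ _ _ |>.1 h
  exact ⟨h'.2.1 _ castSucc_lt_succ, h'.2.2 _ (by rw [succ_castSucc])⟩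

end InsertNth

end Fin

namespace DerivBurgers

section StrictMonoTuples

variable (α : Type*) [Fintype α] [LinearOrder α]

def strictMonoTuples (r : ℕ) : Finset (Fin r → α) :=
  univ.filter fun σ => ∀ a b : Fin r, a < b → σ a < σ b

variable {α}

lemma mem_strictMonoTuples {r : ℕ} {σ : Fin r → α} :
    σ ∈ strictMonoTuples α r ↔ StrictMono σ := by
  simp [strictMonoTuples, StrictMono]

lemma sum_sum_insertNth_eq_sum {β : Type*} [AddCommMonoid β] {r : ℕ} (p : Fin (r + 1))
    (A : (Fin r → α) → Finset α)
    (hA : ∀ σ, StrictMono σ → ∀ i, i ∈ A σ ↔ StrictMono (p.insertNth i σ))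
    (f : (Fin (r + 1) → α) → β) :
    ∑ σ ∈ strictMonoTuples α r, ∑ i ∈ A σ, f (p.insertNth i σ)
      = ∑ τ ∈ strictMonoTuples α (r + 1), f τ := by
  rw [sum_sigma']
  refine sum_nbij' (fun a => p.insertNth a.2 a.1) (fun τ => ⟨p.removeNth τ, τ p⟩)
    ?_ ?_ ?_ ?_ fun _ _ => rfl
  · simp only [mem_sigma, mem_strictMonoTuples, and_imp, Sigma.forall]
    exact fun σ i hσ hi => (hA σ hσ i).1 hi
  · intro τ hτ
    rw [mem_strictMonoTuples] at hτ
    have hσ : StrictMono (p.removeNth τ) := hτ.comp (Fin.strictMono_succAbove p)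
    simp only [mem_sigma, mem_strictMonoTuples]
    exact ⟨hσ, (hA _ hσ _).2 (by rwa [Fin.insertNth_self_removeNth])⟩
  · rintro ⟨σ, i⟩ _
    simp
  · intro τ _
    exact Fin.insertNth_self_removeNth p τ

end StrictMonoTuples

section Dynamics

variable {n : ℕ} (X M : Fin n → ℝ)

def velocity (a : Fin n) : ℝ := ∑ i, M i * |X a - X i|

noncomputable def massRate (a : Fin n) : ℝ := 2 * ∑ i, M a * M i * Real.sign (X i - X a)

variable {X}

lemma massRate_eq (hX : StrictMono X) (a : Fin n) :
    massRate X M a = 2 * M a * (∑ i ∈ Ioi a, M i - ∑ i ∈ Iio a, M i) := by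
  have h : ∀ i, M a * M i * Real.sign (X i - X a)
      = M a * ((if i ∈ Ioi a then M i else 0) - (if i ∈ Iio a then M i else 0)) := by
    intro i
    rcases lt_trichotomy a i with hai | rfl | hia
    · simp [hai, hai.not_gt, Real.sign_of_pos (sub_pos.2 (hX hai))]
    · simp
    · simp [hia, hia.not_gt, Real.sign_of_neg (sub_neg.2 (hX hia))]
  simp only [massRate, h, ← mul_sum, sum_sub_distrib, sum_ite_mem, univ_inter]
  ring

lemma sub_mul_velocity_sub (hX : StrictMono X) {a b : Fin n} (hab : a < b) :
    (X a - X b) * (velocity X M a - velocity X M b)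
      = (X a - X b) ^ 2 * (∑ i ∈ Iio b, M i - ∑ i ∈ Ioi a, M i)
        + ∑ i ∈ Ioo a b, M i * ((X i - X b) ^ 2 - (X i - X a) ^ 2) := by
  have h : ∀ i, (X a - X b) * (M i * |X a - X i| - M i * |X b - X i|)
      = (X a - X b) ^ 2 * ((if i ∈ Iio b then M i else 0) - (if i ∈ Ioi a then M i else 0))
        + (if i ∈ Ioo a b then M i * ((X i - X b) ^ 2 - (X i - X a) ^ 2) else 0) := by
    intro i
    have hXab := hX hab
    rcases le_or_gt i a with hia | hai
    · have := hX.monotone hia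
      simp only [mem_Iio, mem_Ioi, mem_Ioo, hia.trans_lt hab, hia.not_gt, false_and,
        if_true, if_false, abs_of_nonneg (sub_nonneg.2 this),
        abs_of_nonneg (sub_nonneg.2 (this.trans hXab.le))]
      ring
    rcases le_or_gt b i with hbi | hib
    · have := hX.monotone hbi
      simp only [mem_Iio, mem_Ioi, mem_Ioo, hbi.not_gt, hai, and_false, if_true, if_false,
        abs_of_nonpos (sub_nonpos.2 this), abs_of_nonpos (sub_nonpos.2 (hXab.le.trans this))]
      ring
    · simp only [mem_Iio, mem_Ioi, mem_Ioo, hib, hai, and_self, if_true,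
        abs_of_nonpos (sub_nonpos.2 (hX hai).le), abs_of_nonneg (sub_nonneg.2 (hX hib).le)]
      ring
  rw [velocity, velocity, ← sum_sub_distrib, mul_sum, sum_congr rfl fun i _ => h i,
    sum_add_distrib, ← mul_sum, sum_sub_distrib]
  simp only [sum_ite_mem, univ_inter]

end Dynamics

section Weights

variable {ι : Type*} (X M : ι → ℝ) {k : ℕ}

def gap (σ : Fin (k + 1) → ι) (j : Fin k) : ℝ := X (σ j.castSucc) - X (σ j.succ)

def weight (σ : Fin (k + 1) → ι) : ℝ := (∏ j, M (σ j)) * ∏ j, gap X σ j ^ 2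

def erasedWeight (τ : Fin (k + 2) → ι) (q : Fin (k + 1)) : ℝ :=
  (∏ j, M (τ j)) * ∏ l : Fin k, gap X τ (q.succAbove l) ^ 2

variable {X M} {σ : Fin (k + 1) → ι} {i : ι}

lemma erasedWeight_insertNth_last :
    erasedWeight X M ((Fin.last (k + 1)).insertNth i σ) (Fin.last k) = weight X M σ * M i := by
  have hgap (l : Fin k) : gap X (Fin.snoc σ i) l.castSucc = gap X σ l := by
    rw [gap, Fin.succ_castSucc, Fin.snoc_castSucc, Fin.snoc_castSucc, gap]
  rw [erasedWeight, Fin.prod_comp_insertNth, Fin.insertNth_last']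
  simp only [Fin.succAbove_last, hgap, weight]
  ring

lemma erasedWeight_insertNth_zero :
    erasedWeight X M ((0 : Fin (k + 2)).insertNth i σ) 0 = weight X M σ * M i := by
  have hgap (l : Fin k) : gap X (Fin.cons i σ) l.succ = gap X σ l := by
    rw [gap, ← Fin.succ_castSucc, Fin.cons_succ, Fin.cons_succ, gap]
  rw [erasedWeight, Fin.prod_comp_insertNth, Fin.insertNth_zero']
  simp only [Fin.zero_succAbove, hgap, weight]
  ring

lemma gap_insertNth_castSucc_succ_of_ne {j l : Fin k} (h : l ≠ j) :
    gap X (j.castSucc.succ.insertNth i σ) (j.castSucc.succAbove l) = gap X σ l := by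
  rw [gap, ← Fin.succ_succAbove_succ, ← Fin.succ_succAbove_of_ne h,
    ← Fin.castSucc_succAbove_castSucc, ← Fin.succ_castSucc, Fin.insertNth_apply_succAbove,
    Fin.insertNth_apply_succAbove, gap]

lemma gap_insertNth_castSucc_succ_castSucc (j : Fin k) :
    gap X (j.castSucc.succ.insertNth i σ) j.castSucc = X (σ j.castSucc) - X i := by
  have h : j.castSucc.castSucc = j.castSucc.succ.succAbove j.castSucc :=
    (Fin.succAbove_succ_self _).symm
  rw [gap, h, Fin.insertNth_apply_succAbove, Fin.insertNth_apply_same]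

lemma gap_insertNth_castSucc_succ_succ (j : Fin k) :
    gap X (j.castSucc.succ.insertNth i σ) j.succ = X i - X (σ j.succ) := by
  have h : j.succ.succ = j.castSucc.succ.succAbove j.succ := by
    rw [Fin.succ_succAbove_succ, Fin.succAbove_castSucc_self]
  rw [gap, h, ← Fin.succ_castSucc, Fin.insertNth_apply_same, Fin.insertNth_apply_succAbove]

lemma erasedWeight_insertNth_castSucc_succ_castSucc (j : Fin k) :
    erasedWeight X M (j.castSucc.succ.insertNth i σ) j.castSucc
      = M i * (∏ l, M (σ l)) * ((X i - X (σ j.succ)) ^ 2 * ∏ l ∈ univ.erase j, gap X σ l ^ 2) := by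
  have hrest : ∏ l ∈ univ.erase j,
        gap X (j.castSucc.succ.insertNth i σ) (j.castSucc.succAbove l) ^ 2
      = ∏ l ∈ univ.erase j, gap X σ l ^ 2 :=
    prod_congr rfl fun l hl => by rw [gap_insertNth_castSucc_succ_of_ne (ne_of_mem_erase hl)]
  rw [erasedWeight, Fin.prod_comp_insertNth, ← mul_prod_erase univ _ (mem_univ j),
    Fin.succAbove_castSucc_self, gap_insertNth_castSucc_succ_succ, hrest]

lemma erasedWeight_insertNth_castSucc_succ_succ (j : Fin k) :
    erasedWeight X M (j.castSucc.succ.insertNth i σ) j.succ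
      = M i * (∏ l, M (σ l))
        * ((X i - X (σ j.castSucc)) ^ 2 * ∏ l ∈ univ.erase j, gap X σ l ^ 2) := by
  have hrest : ∏ l ∈ univ.erase j, gap X (j.castSucc.succ.insertNth i σ) (j.succ.succAbove l) ^ 2
      = ∏ l ∈ univ.erase j, gap X σ l ^ 2 :=
    prod_congr rfl fun l hl => by
      rw [Fin.succ_succAbove_of_ne (ne_of_mem_erase hl),
        gap_insertNth_castSucc_succ_of_ne (ne_of_mem_erase hl)]
  rw [erasedWeight, Fin.prod_comp_insertNth, ← mul_prod_erase univ _ (mem_univ j),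
    Fin.succAbove_succ_self, gap_insertNth_castSucc_succ_castSucc, sub_sq_comm, hrest]

end Weights

section Conservation

variable {n k : ℕ} (X M : Fin n → ℝ)

noncomputable def weightRate (σ : Fin (k + 1) → Fin n) : ℝ :=
  (∑ j, (∏ l ∈ univ.erase j, M (σ l)) * massRate X M (σ j)) * ∏ j, gap X σ j ^ 2
    + (∏ j, M (σ j)) * ∑ j, (∏ l ∈ univ.erase j, gap X σ l ^ 2)
        * (2 * gap X σ j * (velocity X M (σ j.castSucc) - velocity X M (σ j.succ)))

variable {X}

lemma weightRate_eq (hX : StrictMono X) {σ : Fin (k + 1) → Fin n} (hσ : StrictMono σ) :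
    weightRate X M σ = 2 * (weight X M σ * ∑ i ∈ Ioi (σ (Fin.last k)), M i
      - weight X M σ * ∑ i ∈ Iio (σ 0), M i
      + ∑ j, (∑ i ∈ Ioo (σ j.castSucc) (σ j.succ), M i * (∏ l, M (σ l))
            * ((X i - X (σ j.succ)) ^ 2 * ∏ l ∈ univ.erase j, gap X σ l ^ 2)
          - ∑ i ∈ Ioo (σ j.castSucc) (σ j.succ), M i * (∏ l, M (σ l))
            * ((X i - X (σ j.castSucc)) ^ 2 * ∏ l ∈ univ.erase j, gap X σ l ^ 2))) := by
  have hmass (j : Fin (k + 1)) : (∏ l ∈ univ.erase j, M (σ l)) * massRate X M (σ j)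
      = 2 * (∏ l, M (σ l)) * (∑ i ∈ Ioi (σ j), M i - ∑ i ∈ Iio (σ j), M i) := by
    rw [massRate_eq M hX, ← mul_prod_erase univ (fun l => M (σ l)) (mem_univ j)]
    ring
  have hgap (j : Fin k) : (∏ l ∈ univ.erase j, gap X σ l ^ 2)
        * (2 * gap X σ j * (velocity X M (σ j.castSucc) - velocity X M (σ j.succ)))
      = 2 * (∏ l, gap X σ l ^ 2) * (∑ i ∈ Iio (σ j.succ), M i - ∑ i ∈ Ioi (σ j.castSucc), M i)
        + 2 * ∑ i ∈ Ioo (σ j.castSucc) (σ j.succ),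
            M i * ((X i - X (σ j.succ)) ^ 2 - (X i - X (σ j.castSucc)) ^ 2)
              * ∏ l ∈ univ.erase j, gap X σ l ^ 2 := by
    rw [mul_assoc 2, mul_assoc 2, gap, sub_mul_velocity_sub M hX (hσ Fin.castSucc_lt_succ),
      ← mul_prod_erase univ (fun l => gap X σ l ^ 2) (mem_univ j), ← sum_mul, gap]
    ring
  have hmid : (∏ l, M (σ l)) * ∑ j : Fin k, 2 * ∑ i ∈ Ioo (σ j.castSucc) (σ j.succ),
        M i * ((X i - X (σ j.succ)) ^ 2 - (X i - X (σ j.castSucc)) ^ 2)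
          * ∏ l ∈ univ.erase j, gap X σ l ^ 2
      = 2 * ∑ j, (∑ i ∈ Ioo (σ j.castSucc) (σ j.succ), M i * (∏ l, M (σ l))
            * ((X i - X (σ j.succ)) ^ 2 * ∏ l ∈ univ.erase j, gap X σ l ^ 2)
          - ∑ i ∈ Ioo (σ j.castSucc) (σ j.succ), M i * (∏ l, M (σ l))
            * ((X i - X (σ j.castSucc)) ^ 2 * ∏ l ∈ univ.erase j, gap X σ l ^ 2)) := by
    simp only [mul_sum, mul_sub, ← sum_sub_distrib]
    exact sum_congr rfl fun j _ => sum_congr rfl fun i _ => by ring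
  have htelescope := Fin.sum_univ_sub_add_sum_succ_sub_castSucc
    (fun j => ∑ i ∈ Ioi (σ j), M i) (fun j => ∑ i ∈ Iio (σ j), M i)
  rw [weightRate, sum_congr rfl fun j _ => hmass j, sum_congr rfl fun j _ => hgap j, ← mul_sum,
    sum_add_distrib, ← mul_sum, mul_add, hmid, weight]
  linear_combination (2 * (∏ l, M (σ l)) * ∏ l, gap X σ l ^ 2) * htelescope

lemma sum_weight_mul_sum_Ioi :
    ∑ σ ∈ strictMonoTuples (Fin n) (k + 1), weight X M σ * ∑ i ∈ Ioi (σ (Fin.last k)), M i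
      = ∑ τ ∈ strictMonoTuples (Fin n) (k + 2), erasedWeight X M τ (Fin.last k) := by
  simp_rw [mul_sum, ← erasedWeight_insertNth_last]
  refine sum_sum_insertNth_eq_sum _ _ (fun σ hσ i => ?_) fun τ => erasedWeight X M τ (Fin.last k)
  rw [mem_Ioi, Fin.strictMono_insertNth_last_iff hσ]

lemma sum_weight_mul_sum_Iio :
    ∑ σ ∈ strictMonoTuples (Fin n) (k + 1), weight X M σ * ∑ i ∈ Iio (σ 0), M i
      = ∑ τ ∈ strictMonoTuples (Fin n) (k + 2), erasedWeight X M τ 0 := by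
  simp_rw [mul_sum, ← erasedWeight_insertNth_zero]
  refine sum_sum_insertNth_eq_sum _ _ (fun σ hσ i => ?_) fun τ => erasedWeight X M τ 0
  rw [mem_Iio, Fin.strictMono_insertNth_zero_iff hσ]

lemma sum_sum_Ioo_right (j : Fin k) :
    ∑ σ ∈ strictMonoTuples (Fin n) (k + 1), ∑ i ∈ Ioo (σ j.castSucc) (σ j.succ),
        M i * (∏ l, M (σ l)) * ((X i - X (σ j.succ)) ^ 2 * ∏ l ∈ univ.erase j, gap X σ l ^ 2)
      = ∑ τ ∈ strictMonoTuples (Fin n) (k + 2), erasedWeight X M τ j.castSucc := by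
  simp_rw [← erasedWeight_insertNth_castSucc_succ_castSucc]
  refine sum_sum_insertNth_eq_sum _ _ (fun σ hσ i => ?_) fun τ => erasedWeight X M τ j.castSucc
  rw [mem_Ioo, Fin.strictMono_insertNth_castSucc_succ_iff hσ]

lemma sum_sum_Ioo_left (j : Fin k) :
    ∑ σ ∈ strictMonoTuples (Fin n) (k + 1), ∑ i ∈ Ioo (σ j.castSucc) (σ j.succ),
        M i * (∏ l, M (σ l)) * ((X i - X (σ j.castSucc)) ^ 2 * ∏ l ∈ univ.erase j, gap X σ l ^ 2)
      = ∑ τ ∈ strictMonoTuples (Fin n) (k + 2), erasedWeight X M τ j.succ := by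
  simp_rw [← erasedWeight_insertNth_castSucc_succ_succ]
  refine sum_sum_insertNth_eq_sum _ _ (fun σ hσ i => ?_) fun τ => erasedWeight X M τ j.succ
  rw [mem_Ioo, Fin.strictMono_insertNth_castSucc_succ_iff hσ]

theorem sum_weightRate_eq_zero (hX : StrictMono X) :
    ∑ σ ∈ strictMonoTuples (Fin n) (k + 1), weightRate X M σ = 0 := by
  rw [sum_congr rfl fun σ hσ => weightRate_eq M hX (mem_strictMonoTuples.1 hσ), ← mul_sum,
    sum_add_distrib, sum_sub_distrib, sum_comm (s := strictMonoTuples _ _)]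
  simp only [sum_sub_distrib, sum_weight_mul_sum_Ioi, sum_weight_mul_sum_Iio, sum_sum_Ioo_right,
    sum_sum_Ioo_left]
  have h := Fin.sum_univ_sub_add_sum_succ_sub_castSucc
    (fun q => ∑ τ ∈ strictMonoTuples (Fin n) (k + 2), erasedWeight X M τ q)
    (fun q => ∑ τ ∈ strictMonoTuples (Fin n) (k + 2), erasedWeight X M τ q)
  simp only [sub_self, sum_const_zero, zero_add, sum_sub_distrib] at h
  linear_combination -2 * h

end Conservation

section Flow

variable {n k : ℕ} {x m : Fin n → ℝ → ℝ} {t : ℝ}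

lemma hasDerivAt_weight (hx : ∀ a, HasDerivAt (x a) (velocity (x · t) (m · t) a) t)
    (hm : ∀ a, HasDerivAt (m a) (massRate (x · t) (m · t) a) t) (σ : Fin (k + 1) → Fin n) :
    HasDerivAt (fun s => weight (x · s) (m · s) σ) (weightRate (x · t) (m · t) σ) t := by
  have hP := HasDerivAt.fun_finsetProd (u := univ) fun j _ => hm (σ j)
  have hQ := HasDerivAt.fun_finsetProd (u := univ) fun (j : Fin k) _ =>
    ((hx (σ j.castSucc)).fun_sub (hx (σ j.succ))).fun_pow 2
  refine (hP.mul hQ).congr_deriv ?_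
  simp only [weightRate, gap, smul_eq_mul, Nat.cast_ofNat, Nat.add_one_sub_one, pow_one]

end Flow

end DerivBurgers

theorem stmt1 (n : ℕ) (x m : Fin n → ℝ → ℝ)
    (hord : ∀ t : ℝ, StrictMono fun k => x k t)
    (hx : ∀ (k : Fin n) (t : ℝ),
      HasDerivAt (x k) (∑ i, m i t * |x k t - x i t|) t)
    (hm : ∀ (k : Fin n) (t : ℝ),
      HasDerivAt (m k) (2 * ∑ i, m k t * m i t * Real.sign (x i t - x k t)) t)
    (k' : ℕ) (s t : ℝ) :
    (∑ σ ∈ Finset.univ.filter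
        (fun σ : Fin (k' + 1) → Fin n => ∀ a b : Fin (k' + 1), a < b → σ a < σ b),
      (∏ j, m (σ j) s) * ∏ j : Fin k', (x (σ j.castSucc) s - x (σ j.succ) s) ^ 2)
    = ∑ σ ∈ Finset.univ.filter
        (fun σ : Fin (k' + 1) → Fin n => ∀ a b : Fin (k' + 1), a < b → σ a < σ b),
      (∏ j, m (σ j) t) * ∏ j : Fin k', (x (σ j.castSucc) t - x (σ j.succ) t) ^ 2 := by
  have hconst : ∀ u, HasDerivAt
      (fun v => ∑ σ ∈ DerivBurgers.strictMonoTuples (Fin n) (k' + 1),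
        DerivBurgers.weight (x · v) (m · v) σ) 0 u := fun u => by
    have h := HasDerivAt.fun_sum fun σ (_ : σ ∈ DerivBurgers.strictMonoTuples (Fin n) (k' + 1)) =>
      DerivBurgers.hasDerivAt_weight (fun a => hx a u) (fun a => hm a u) σ
    rwa [DerivBurgers.sum_weightRate_eq_zero _ (hord u)] at h
  exact is_const_of_deriv_eq_zero (fun u => (hconst u).differentiableAt)
    (fun u => (hconst u).deriv) s t
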